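/- Let 0 ≤ α < 1, let π be a non-increasing degree sequence of some k-uniform supertree, let G be a supertree attaining the maximum α-spectral radius in 𝕋_π, and let x be the α-Perron vector of G. Then for all vertices u, v ∈ V(G), if d_G(u) > d_G(v), then x_u > x_v. -/

import Mathlib

/-- A (finite) hypergraph on vertex type `V`: a finite set of edges, each a finite
set of vertices.  For the results below the vertex set is the whole type `V`. -/
structure FinHypergraph (V : Type*) where
  edges : Finset (Finset V)

namespace FinHypergraph

variable {V W : Type*}

/-- `G` is `k`-uniform: every edge has exactly `k` vertices. -/
def Uniform (G : FinHypergraph V) (k : ℕ) : Prop := ∀ e ∈ G.edges, e.card = k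

/-- The degree of a vertex: the number of edges containing it. -/
def degree [DecidableEq V] (G : FinHypergraph V) (v : V) : ℕ :=
  (G.edges.filter fun e => v ∈ e).card

/-- A walk of length `l` from `u` to `v`: vertices `vs 0 = u, …, vs l = v` and edges
`es 0, …, es (l-1)` with consecutive vertices lying in the corresponding edge. -/
def Walk (G : FinHypergraph V) (u v : V) (l : ℕ) : Prop :=
  ∃ (vs : Fin (l + 1) → V) (es : Fin l → Finset V),
    vs 0 = u ∧ vs (Fin.last l) = v ∧
    ∀ i : Fin l, es i ∈ G.edges ∧ vs i.castSucc ∈ es i ∧ vs i.succ ∈ es i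

/-- `G` is connected: any two vertices are joined by a walk (equivalently, a path). -/
def Connected (G : FinHypergraph V) : Prop := ∀ u v : V, ∃ l, G.Walk u v l

/-- The distance between two vertices: the minimum length of a walk joining them. -/
noncomputable def hdist (G : FinHypergraph V) (u v : V) : ℕ := sInf {l | G.Walk u v l}

/-- `G` has a cycle: distinct vertices `v_1, …, v_l` and distinct edges `e_1, …, e_l`
(`l ≥ 2`) with `{v_i, v_{i+1}} ⊆ e_i` (indices mod `l`). -/
def HasCycle (G : FinHypergraph V) : Prop :=
  ∃ (l : ℕ) (hl : 2 ≤ l) (vs : Fin l → V) (es : Fin l → Finset V),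
    Function.Injective vs ∧ Function.Injective es ∧
    (∀ i, es i ∈ G.edges) ∧
    ∀ i : Fin l, vs i ∈ es i ∧ vs ⟨((i : ℕ) + 1) % l, Nat.mod_lt _ (by omega)⟩ ∈ es i

/-- A `k`-uniform supertree: a `k`-uniform hypergraph that is connected and acyclic. -/
def IsSupertree (G : FinHypergraph V) (k : ℕ) : Prop :=
  G.Uniform k ∧ G.Connected ∧ ¬ G.HasCycle

/-- `e` is a pendent edge of `G`: one of its vertices has degree at least `2` and all
its other vertices have degree `1`. -/
def IsPendentEdge [DecidableEq V] (G : FinHypergraph V) (e : Finset V) : Prop :=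
  e ∈ G.edges ∧ ∃ v ∈ e, 2 ≤ G.degree v ∧ ∀ w ∈ e, w ≠ v → G.degree w = 1

/-- `S` is an independent set: no two of its vertices lie in a common edge. -/
def IsIndep (G : FinHypergraph V) (S : Finset V) : Prop :=
  ∀ u ∈ S, ∀ v ∈ S, u ≠ v → ∀ e ∈ G.edges, ¬ (u ∈ e ∧ v ∈ e)

/-- The independence number: the maximum size of an independent set. -/
noncomputable def indepNum (G : FinHypergraph V) : ℕ :=
  sSup {n | ∃ S : Finset V, G.IsIndep S ∧ S.card = n}

/-- `M` is a matching: a set of pairwise disjoint edges of `G`. -/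
def IsMatching [DecidableEq V] (G : FinHypergraph V) (M : Finset (Finset V)) : Prop :=
  M ⊆ G.edges ∧ ∀ e ∈ M, ∀ f ∈ M, e ≠ f → e ∩ f = ∅

/-- The matching number: the maximum size of a matching. -/
noncomputable def matchNum [DecidableEq V] (G : FinHypergraph V) : ℕ :=
  sSup {n | ∃ M : Finset (Finset V), G.IsMatching M ∧ M.card = n}

/-- The `α`-spectral radius of a (connected) `k`-uniform hypergraph:
`ρ_α(G) = max { Σ_{e∈E} ( α Σ_{v∈e} x_v^k + (1-α) k Π_{v∈e} x_v ) :
x ≥ 0, Σ_v x_v^k = 1 }`. -/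
noncomputable def aspec [Fintype V] (G : FinHypergraph V) (k : ℕ) (α : ℝ) : ℝ :=
  sSup {r : ℝ | ∃ x : V → ℝ, (∀ v, 0 ≤ x v) ∧ (∑ v, x v ^ k) = 1 ∧
    r = ∑ e ∈ G.edges, (α * ∑ v ∈ e, x v ^ k + (1 - α) * (k : ℝ) * ∏ v ∈ e, x v)}

/-- `x` is the `α`-Perron vector of `G`: the positive unit maximizer in the
variational characterization of `ρ_α(G)`. -/
def IsPerron [Fintype V] (G : FinHypergraph V) (k : ℕ) (α : ℝ) (x : V → ℝ) : Prop :=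
  (∀ v, 0 < x v) ∧ (∑ v, x v ^ k) = 1 ∧
  (∑ e ∈ G.edges, (α * ∑ v ∈ e, x v ^ k + (1 - α) * (k : ℝ) * ∏ v ∈ e, x v)) =
    G.aspec k α

/-- The multiset of vertex degrees of `G` (the degree sequence up to ordering). -/
noncomputable def degreeMultiset [Fintype V] [DecidableEq V] (G : FinHypergraph V) :
    Multiset ℕ :=
  (Finset.univ : Finset V).val.map G.degree

/-- Isomorphism of hypergraphs: a bijection of the vertex sets carrying edges to
edges. -/
def Iso [DecidableEq W] (G : FinHypergraph V) (H : FinHypergraph W) : Prop :=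
  ∃ φ : V ≃ W, ∀ e : Finset V, e ∈ G.edges ↔ e.image φ ∈ H.edges

end FinHypergraph

/-!
Suppose `x u ≤ x v`. Replacing `u` by `v` in `d(u) - d(v)` edges through `u`, chosen away from the
last edge through `u` on a `u`–`v` walk, gives a supertree with the degrees of `u` and `v`
exchanged, and since `x u ≤ x v` the objective at `x` does not decrease. By maximality of `G`,
`x` is then also a Perron vector of the new supertree, with the same `ρ`. But the eigenequations
`α d(u) x_u^{k-1} + (1 - α) ∑_{e ∋ u} ∏_{e ∖ u} x = ρ x_u^{k-1}` before and after the move differ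
by `α (d(u) - d(v)) x_u^{k-1} + (1 - α) ∑_{moved e} ∏_{e ∖ u} x > 0`.

That the new hypergraph has no cycle follows from the count `|V| - 1 = |E| (k - 1)`, which
characterises connected `k`-uniform hypergraphs without cycles.
-/

namespace FinHypergraph

variable {V : Type*}

section Walks

variable {G H : FinHypergraph V} {u v w : V} {l : ℕ} {vs : ℕ → V} {es : ℕ → Finset V}

/-- ℕ-indexed walk data (entries beyond the length `l` are irrelevant), which is easier to cut
and splice than the `Fin`-indexed data of `Walk`. -/
def IsWalkOn (G : FinHypergraph V) (l : ℕ) (vs : ℕ → V) (es : ℕ → Finset V) : Prop :=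
  ∀ i < l, es i ∈ G.edges ∧ vs i ∈ es i ∧ vs (i + 1) ∈ es i

def NWalk (G : FinHypergraph V) (u v : V) (l : ℕ) : Prop :=
  ∃ (vs : ℕ → V) (es : ℕ → Finset V), vs 0 = u ∧ vs l = v ∧ G.IsWalkOn l vs es

def Reach (G : FinHypergraph V) (u v : V) : Prop := ∃ l, G.NWalk u v l

theorem walk_iff_nwalk : G.Walk u v l ↔ G.NWalk u v l := by
  constructor
  · rintro ⟨vs, es, h0, hl, hstep⟩
    refine ⟨fun n => vs ⟨min n l, by omega⟩, fun n => if h : n < l then es ⟨n, h⟩ else ∅,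
      by simpa using h0, by simpa [Fin.last] using hl, fun i hi => ?_⟩
    obtain ⟨he, h1, h2⟩ := hstep ⟨i, hi⟩
    refine ⟨by simp [hi, he], ?_, ?_⟩
    · convert h1 using 2
      · simp [hi]
      · ext
        simp only [Fin.castSucc, Fin.castAdd_mk, inf_eq_left]
        omega
    · convert h2 using 2
      · simp [hi]
      · ext
        simp only [Fin.succ, inf_eq_left, Order.add_one_le_iff]
        omega
  · rintro ⟨vs, es, h0, hl, hstep⟩
    exact ⟨fun i => vs i, fun i => es i, by simpa using h0, hl, fun i => hstep i i.isLt⟩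

theorem connected_iff_reach : G.Connected ↔ ∀ u v : V, G.Reach u v := by
  simp only [Connected, Reach, walk_iff_nwalk]

theorem IsWalkOn.nwalk_take (h : G.IsWalkOn l vs es) {i : ℕ} (hi : i ≤ l) :
    G.NWalk (vs 0) (vs i) i :=
  ⟨vs, es, rfl, rfl, fun n hn => h n (by omega)⟩

theorem IsWalkOn.shift (h : G.IsWalkOn l vs es) (j : ℕ) :
    G.IsWalkOn (l - j) (fun n => vs (j + n)) (fun n => es (j + n)) :=
  fun n hn => h (j + n) (by omega)

theorem IsWalkOn.nwalk_drop (h : G.IsWalkOn l vs es) {j : ℕ} (hj : j ≤ l) :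
    G.NWalk (vs j) (vs l) (l - j) :=
  ⟨_, _, rfl, by simp only [Nat.add_sub_cancel' hj], h.shift j⟩

theorem nwalk_zero (h : G.NWalk u v 0) : u = v := by
  obtain ⟨vs, es, h0, hl, _⟩ := h
  rw [← h0, ← hl]

theorem nwalk_refl (G : FinHypergraph V) (u : V) : G.NWalk u u 0 :=
  ⟨fun _ => u, fun _ => ∅, rfl, rfl, by simp [IsWalkOn]⟩

theorem nwalk_single {e : Finset V} (he : e ∈ G.edges) (hu : u ∈ e) (hv : v ∈ e) :
    G.NWalk u v 1 :=
  ⟨fun n => if n = 0 then u else v, fun _ => e, rfl, rfl, by simp [IsWalkOn, he, hu, hv]⟩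

theorem NWalk.append {l₁ l₂ : ℕ} (h₁ : G.NWalk u v l₁) (h₂ : G.NWalk v w l₂) :
    G.NWalk u w (l₁ + l₂) := by
  obtain ⟨vs, es, h0, hl, hstep⟩ := h₁
  obtain ⟨vs', es', h0', hl', hstep'⟩ := h₂
  refine ⟨fun n => if n ≤ l₁ then vs n else vs' (n - l₁),
    fun n => if n < l₁ then es n else es' (n - l₁), by simp [h0], ?_, fun i hi => ?_⟩
  · rcases Nat.eq_zero_or_pos l₂ with rfl | hl₂
    · simp [hl, ← hl', h0']
    · simpa [show ¬ l₁ + l₂ ≤ l₁ by omega] using hl'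
  · rcases lt_or_ge i l₁ with hi₁ | hi₁
    · simpa [hi₁, hi₁.le, Nat.succ_le_of_lt hi₁] using hstep i hi₁
    · have hstep_i := hstep' (i - l₁) (by omega)
      rw [show i - l₁ + 1 = i + 1 - l₁ by omega] at hstep_i
      rcases hi₁.eq_or_lt with rfl | hi₁
      · simpa [hl, ← h0'] using hstep_i
      · simpa [show ¬ i < l₁ by omega, show ¬ i ≤ l₁ by omega, show ¬ i + 1 ≤ l₁ by omega]
          using hstep_i

theorem NWalk.reverse (h : G.NWalk u v l) : G.NWalk v u l := by
  obtain ⟨vs, es, h0, hl, hstep⟩ := h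
  refine ⟨fun n => vs (l - n), fun n => es (l - n - 1), by simp [hl], by simp [h0],
    fun i hi => ?_⟩
  obtain ⟨he, ha, hb⟩ := hstep (l - i - 1) (by omega)
  rw [show l - i - 1 + 1 = l - i by omega] at hb
  exact ⟨he, hb, by simpa only [show l - (i + 1) = l - i - 1 by omega] using ha⟩

theorem Reach.refl (G : FinHypergraph V) (u : V) : G.Reach u u := ⟨0, nwalk_refl G u⟩

theorem Reach.trans (h₁ : G.Reach u v) (h₂ : G.Reach v w) : G.Reach u w := by
  obtain ⟨l₁, h₁⟩ := h₁
  obtain ⟨l₂, h₂⟩ := h₂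
  exact ⟨l₁ + l₂, h₁.append h₂⟩

theorem Reach.symm (h : G.Reach u v) : G.Reach v u := by
  obtain ⟨l, h⟩ := h
  exact ⟨l, h.reverse⟩

theorem reach_of_mem {e : Finset V} (he : e ∈ G.edges) (hu : u ∈ e) (hv : v ∈ e) :
    G.Reach u v :=
  ⟨1, nwalk_single he hu hv⟩

theorem IsWalkOn.reach_of_forall_edge (h : G.IsWalkOn l vs es)
    (hGH : ∀ e ∈ G.edges, ∀ a ∈ e, ∀ b ∈ e, H.Reach a b) :
    ∀ i ≤ l, H.Reach (vs 0) (vs i)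
  | 0, _ => Reach.refl H _
  | i + 1, hi =>
    let ⟨he, ha, hb⟩ := h i (by omega)
    (h.reach_of_forall_edge hGH i (by omega)).trans (hGH _ he _ ha _ hb)

theorem Reach.of_forall_edge (hGH : ∀ e ∈ G.edges, ∀ a ∈ e, ∀ b ∈ e, H.Reach a b)
    (h : G.Reach u v) : H.Reach u v := by
  obtain ⟨l, vs, es, rfl, rfl, hw⟩ := h
  exact hw.reach_of_forall_edge hGH l le_rfl

theorem Reach.mono (hGH : G.edges ⊆ H.edges) (h : G.Reach u v) : H.Reach u v :=
  h.of_forall_edge fun _ he _ ha _ hb => reach_of_mem (hGH he) ha hb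

theorem nwalk_hdist (h : G.Reach u v) : G.NWalk u v (G.hdist u v) := by
  obtain ⟨l, hl⟩ := h
  exact walk_iff_nwalk.1 (Nat.sInf_mem (s := {l | G.Walk u v l}) ⟨l, walk_iff_nwalk.2 hl⟩)

theorem hdist_le (h : G.NWalk u v l) : G.hdist u v ≤ l :=
  Nat.sInf_le (walk_iff_nwalk.2 h)

end Walks

section Paths

variable {G : FinHypergraph V} {u v : V} {l : ℕ} {vs : ℕ → V} {es : ℕ → Finset V}

theorem IsWalkOn.injOn_vertices (h : G.IsWalkOn l vs es) (hmin : l ≤ G.hdist (vs 0) (vs l)) :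
    Set.InjOn vs (Set.Iic l) := by
  have key : ∀ i j, i < j → j ≤ l → vs i ≠ vs j := by
    intro i j hij hj hv
    have hdrop := h.nwalk_drop hj
    rw [← hv] at hdrop
    have := hdist_le ((h.nwalk_take (hij.le.trans hj)).append hdrop)
    omega
  intro i hi j hj hv
  rw [Set.mem_Iic] at hi hj
  rcases lt_trichotomy i j with hij | rfl | hij
  · exact absurd hv (key i j hij hj)
  · rfl
  · exact absurd hv.symm (key j i hij hi)

theorem IsWalkOn.injOn_edges (h : G.IsWalkOn l vs es) (hmin : l ≤ G.hdist (vs 0) (vs l)) :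
    Set.InjOn es (Set.Iio l) := by
  have key : ∀ i j, i < j → j < l → es i ≠ es j := by
    intro i j hij hj he
    obtain ⟨hei, hvi, -⟩ := h i (by omega)
    have hshort : G.NWalk (vs i) (vs (j + 1)) 1 := nwalk_single hei hvi (he ▸ (h j hj).2.2)
    have := hdist_le (((h.nwalk_take (by omega : i ≤ l)).append hshort).append
      (h.nwalk_drop (by omega : j + 1 ≤ l)))
    omega
  intro i hi j hj he
  rw [Set.mem_Iio] at hi hj
  rcases lt_trichotomy i j with hij | rfl | hij
  · exact absurd he (key i j hij hj)
  · rfl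
  · exact absurd he.symm (key j i hij hi)

theorem hasCycle_of_injOn (hl : 2 ≤ l) (hvs : Set.InjOn vs (Set.Iio l))
    (hes : Set.InjOn es (Set.Iio l)) (hedge : ∀ i < l, es i ∈ G.edges)
    (hmem : ∀ i < l, vs i ∈ es i ∧ vs ((i + 1) % l) ∈ es i) : G.HasCycle :=
  ⟨l, hl, fun i => vs i, fun i => es i, fun a b h => Fin.ext (hvs a.isLt b.isLt h),
    fun a b h => Fin.ext (hes a.isLt b.isLt h), fun i => hedge i i.isLt, fun i => hmem i i.isLt⟩

variable [DecidableEq V]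

def eraseEdge (G : FinHypergraph V) (e : Finset V) : FinHypergraph V := ⟨G.edges.erase e⟩

/-- Closing a shortest `a`–`b` walk of `G - e` with `e` gives a cycle. -/
theorem not_reach_eraseEdge (hac : ¬ G.HasCycle) {e : Finset V} {a b : V} (he : e ∈ G.edges)
    (ha : a ∈ e) (hb : b ∈ e) (hab : a ≠ b) : ¬ (G.eraseEdge e).Reach a b := by
  intro hr
  obtain ⟨vs, es, h0, hl, hw⟩ := nwalk_hdist hr
  have hvs := hw.injOn_vertices (by rw [h0, hl])
  have hes := hw.injOn_edges (by rw [h0, hl])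
  generalize (G.eraseEdge e).hdist a b = t at hl hw hvs hes
  have ht : t ≠ 0 := by rintro rfl; exact hab (h0.symm.trans hl)
  have hwe : ∀ i < t, es i ≠ e ∧ es i ∈ G.edges := fun i hi => Finset.mem_erase.1 (hw i hi).1
  apply hac
  refine hasCycle_of_injOn (l := t + 1) (es := fun n => if n = t then e else es n) (by omega)
    (hvs.mono fun i hi => Set.mem_Iic.2 (Nat.lt_succ_iff.1 hi)) ?_ ?_ ?_
  · intro i hi j hj hij
    simp only [Set.mem_Iio] at hi hj
    by_cases hit : i = t <;> by_cases hjt : j = t <;> simp only [hit, hjt, if_true, if_false] at hij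
    · omega
    · exact absurd hij.symm (hwe j (by omega)).1
    · exact absurd hij (hwe i (by omega)).1
    · exact hes (Set.mem_Iio.2 (by omega)) (Set.mem_Iio.2 (by omega)) hij
  · intro i hi
    by_cases hit : i = t
    · simpa [hit] using he
    · simpa [hit] using (hwe i (by omega)).2
  · intro i hi
    by_cases hit : i = t
    · simpa [hit, h0, hl] using ⟨hb, ha⟩
    · simpa [hit, Nat.mod_eq_of_lt (show i + 1 < t + 1 by omega)] using
        ⟨(hw i (by omega)).2.1, (hw i (by omega)).2.2⟩

theorem IsWalkOn.edge_zero_eq {e : Finset V} (hac : ¬ G.HasCycle) (h : G.IsWalkOn l vs es)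
    (hvs : Set.InjOn vs (Set.Iic l))
    (he : e ∈ G.edges) (hw : vs 0 ∈ e) (hnr : ¬ (G.eraseEdge e).Reach (vs 0) (vs l)) :
    es 0 = e := by
  have huse : ∃ n, n < l ∧ es n = e := by
    by_contra! hnone
    exact hnr ⟨l, vs, es, rfl, rfl, fun i hi =>
      ⟨Finset.mem_erase.2 ⟨hnone i hi, (h i hi).1⟩, (h i hi).2⟩⟩
  obtain ⟨hn, hne⟩ := Nat.find_spec huse
  have hbefore : ∀ m < Nat.find huse, es m ≠ e := fun m hm hme =>
    Nat.find_min huse hm ⟨by omega, hme⟩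
  set n := Nat.find huse
  have hreach : (G.eraseEdge e).Reach (vs 0) (vs n) :=
    ⟨n, vs, es, rfl, rfl, fun i hi =>
      ⟨Finset.mem_erase.2 ⟨hbefore i hi, (h i (by omega)).1⟩, (h i (by omega)).2⟩⟩
  have hvn : vs n ∈ e := by
    rw [← hne]
    exact (h n hn).2.1
  have hfirst : vs n = vs 0 := by
    by_contra hne'
    exact not_reach_eraseEdge hac he hw hvn (Ne.symm hne') hreach
  have h0 : n = 0 := hvs (Set.mem_Iic.2 hn.le) (Set.mem_Iic.2 (Nat.zero_le l)) hfirst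
  rw [← h0, hne]

def deleteIncidenceSet (G : FinHypergraph V) (u : V) : FinHypergraph V :=
  ⟨G.edges.filter (u ∉ ·)⟩

/-- Take the last edge through `u` on a `u`–`v` walk. -/
theorem exists_mem_reach_deleteIncidenceSet (h : G.Reach u v) (huv : u ≠ v) :
    ∃ f ∈ G.edges, u ∈ f ∧ ∃ w ∈ f, (G.deleteIncidenceSet u).Reach w v := by
  obtain ⟨l, vs, es, h0, hl, hw⟩ := h
  have hl0 : 0 < l := Nat.pos_of_ne_zero (by rintro rfl; exact huv (h0.symm.trans hl))
  obtain ⟨i, hi, hmax⟩ := ((Finset.range l).filter fun i => u ∈ es i).exists_max_image id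
    ⟨0, by simpa [hl0, h0] using (hw 0 hl0).2.1⟩
  rw [Finset.mem_filter, Finset.mem_range] at hi
  refine ⟨es i, (hw i hi.1).1, hi.2, vs (i + 1), (hw i hi.1).2.2, l - (i + 1),
    fun n => vs (i + 1 + n), fun n => es (i + 1 + n), rfl,
    by simp only [Nat.add_sub_cancel' (show i + 1 ≤ l by omega), hl], fun n hn => ?_⟩
  obtain ⟨he, hmem⟩ := hw.shift (i + 1) n hn
  refine ⟨Finset.mem_filter.2 ⟨he, fun hu => ?_⟩, hmem⟩
  have : i + 1 + n ≤ i := hmax (i + 1 + n) (Finset.mem_filter.2 ⟨Finset.mem_range.2 (by omega), hu⟩)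
  omega

theorem one_le_degree_of_reach (h : G.Reach u v) (huv : u ≠ v) : 1 ≤ G.degree u := by
  obtain ⟨f, hf, huf, -⟩ := exists_mem_reach_deleteIncidenceSet h huv
  exact Finset.card_pos.2 ⟨f, Finset.mem_filter.2 ⟨hf, huf⟩⟩

end Paths

section Counting

theorem exists_max_of_hasCycle {G : FinHypergraph V} (hcyc : G.HasCycle) (f : V → ℕ) :
    ∃ w, ∃ g₁ ∈ G.edges, ∃ g₂ ∈ G.edges, g₁ ≠ g₂ ∧ w ∈ g₁ ∧ w ∈ g₂ ∧
      (∃ p ∈ g₁, p ≠ w ∧ f p ≤ f w) ∧ (∃ p ∈ g₂, p ≠ w ∧ f p ≤ f w) := by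
  obtain ⟨l, hl, vs, es, hvinj, heinj, hedge, hmem⟩ := hcyc
  have : NeZero l := ⟨by omega⟩
  have hsucc : ∀ j : Fin l, (⟨(j + 1) % l, Nat.mod_lt _ (by omega)⟩ : Fin l) = j + 1 := by
    intro j
    ext
    simp [Fin.val_add]
  have hone : (1 : Fin l) ≠ 0 := by
    intro h
    have := congrArg Fin.val h
    simp only [Fin.coe_ofNat_eq_mod, Nat.zero_mod, Nat.one_mod_eq_zero_iff] at this
    omega
  obtain ⟨i, -, hmax⟩ := Finset.univ.exists_max_image (fun i => f (vs i)) Finset.univ_nonempty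
  have hpred := hmem (i - 1)
  rw [hsucc, sub_add_cancel] at hpred
  have hnext := hmem i
  rw [hsucc] at hnext
  refine ⟨vs i, es (i - 1), hedge _, es i, hedge _, fun h => hone ?_, hpred.2, hnext.1,
    ⟨vs (i - 1), hpred.1, fun h => hone ?_, hmax _ (Finset.mem_univ _)⟩,
    ⟨vs (i + 1), hnext.2, fun h => hone ?_, hmax _ (Finset.mem_univ _)⟩⟩
  · simpa using heinj h
  · simpa using hvinj h
  · simpa using hvinj h

variable {H : FinHypergraph V} {k : ℕ} {r w : V}

open Classical in
noncomputable def descent (H : FinHypergraph V) (r w : V) : Finset V × V :=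
  if h : ∃ p : Finset V × V, p.1 ∈ H.edges ∧ w ∈ p.1 ∧ p.2 ∈ p.1 ∧
      H.hdist p.2 r < H.hdist w r then h.choose else (∅, w)

theorem descent_spec (hcon : ∀ a b : V, H.Reach a b) (hw : w ≠ r) :
    (H.descent r w).1 ∈ H.edges ∧ w ∈ (H.descent r w).1 ∧
      (H.descent r w).2 ∈ (H.descent r w).1 ∧ H.hdist (H.descent r w).2 r < H.hdist w r := by
  have hex : ∃ p : Finset V × V, p.1 ∈ H.edges ∧ w ∈ p.1 ∧ p.2 ∈ p.1 ∧
      H.hdist p.2 r < H.hdist w r := by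
    obtain ⟨vs, es, h0, hl, hstep⟩ := nwalk_hdist (hcon w r)
    have hpos : 0 < H.hdist w r := Nat.pos_of_ne_zero fun h =>
      hw (nwalk_zero (h ▸ nwalk_hdist (hcon w r)))
    obtain ⟨he, ha, hb⟩ := hstep 0 hpos
    have := hdist_le (hstep.nwalk_drop (j := 1) hpos)
    rw [hl] at this
    exact ⟨(es 0, vs 1), he, h0 ▸ ha, hb, show H.hdist (vs 1) r < _ by omega⟩
  rw [descent, dif_pos hex]
  exact hex.choose_spec

variable [Fintype V] [DecidableEq V]

/-- The fibers of `descent r` partition `V ∖ {r}`; each has at most `k - 1` elements, and all are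
full exactly when `H` has no cycle. -/
noncomputable def fiber (H : FinHypergraph V) (r : V) (e : Finset V) : Finset V :=
  (Finset.univ.erase r).filter fun w => (H.descent r w).1 = e

theorem sum_card_fiber (hcon : ∀ a b : V, H.Reach a b) :
    ∑ e ∈ H.edges, (H.fiber r e).card = (Finset.univ.erase r).card :=
  (Finset.card_eq_sum_card_fiberwise fun _ hw =>
    (descent_spec hcon (Finset.ne_of_mem_erase hw)).1).symm

theorem exists_fiber_subset_erase {e : Finset V} (hcon : ∀ a b : V, H.Reach a b)
    (hne : (H.fiber r e).Nonempty) :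
    ∃ w' ∈ e, H.fiber r e ⊆ e.erase w' ∧ ∀ y ∈ H.fiber r e, H.hdist w' r < H.hdist y r := by
  obtain ⟨w₀, hw₀, hmin⟩ := (H.fiber r e).exists_min_image (fun w => H.hdist w r) hne
  have hspec : ∀ y ∈ H.fiber r e, y ∈ e ∧ (H.descent r y).1 = e := by
    intro y hy
    obtain ⟨hyr, hye⟩ := Finset.mem_filter.1 hy
    exact ⟨hye ▸ (descent_spec hcon (Finset.ne_of_mem_erase hyr)).2.1, hye⟩
  obtain ⟨-, -, hmem, hlt⟩ := descent_spec hcon (Finset.ne_of_mem_erase (Finset.mem_filter.1 hw₀).1)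
  have hcloser : ∀ y ∈ H.fiber r e, H.hdist (H.descent r w₀).2 r < H.hdist y r :=
    fun y hy => hlt.trans_le (hmin y hy)
  refine ⟨(H.descent r w₀).2, (hspec w₀ hw₀).2 ▸ hmem, fun y hy => ?_, hcloser⟩
  refine Finset.mem_erase.2 ⟨fun hyw => ?_, (hspec y hy).1⟩
  exact (hcloser y hy).ne (congrArg (H.hdist · r) hyw).symm

theorem card_fiber_le {e : Finset V} (hcon : ∀ a b : V, H.Reach a b) (huni : H.Uniform k)
    (he : e ∈ H.edges) : (H.fiber r e).card ≤ k - 1 := by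
  rcases (H.fiber r e).eq_empty_or_nonempty with h | h
  · simp [h]
  · obtain ⟨w', hw', hsub, -⟩ := exists_fiber_subset_erase hcon h
    calc (H.fiber r e).card ≤ (e.erase w').card := Finset.card_le_card hsub
      _ = k - 1 := by rw [Finset.card_erase_of_mem hw', huni e he]

/-- At most one vertex of `e` reaches `r` in `H - e`, and every other one must descend
through `e`. -/
theorem le_card_fiber {e : Finset V} (hcon : ∀ a b : V, H.Reach a b) (hac : ¬ H.HasCycle)
    (huni : H.Uniform k) (he : e ∈ H.edges) : k - 1 ≤ (H.fiber r e).card := by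
  classical
  set R := e.filter fun w => (H.eraseEdge e).Reach w r
  have hR : R.card ≤ 1 := Finset.card_le_one.2 fun a ha b hb => by
    by_contra hab
    exact not_reach_eraseEdge hac he (Finset.mem_filter.1 ha).1 (Finset.mem_filter.1 hb).1 hab
      ((Finset.mem_filter.1 ha).2.trans (Finset.mem_filter.1 hb).2.symm)
  have hsub : e \ R ⊆ H.fiber r e := by
    intro w hw
    obtain ⟨hwe, hwR⟩ := Finset.mem_sdiff.1 hw
    have hnr : ¬ (H.eraseEdge e).Reach w r := fun hr => hwR (Finset.mem_filter.2 ⟨hwe, hr⟩)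
    have hwr : w ≠ r := by rintro rfl; exact hnr (Reach.refl _ w)
    obtain ⟨hf, hwf, hw'f, hlt⟩ := descent_spec hcon hwr
    obtain ⟨vs, es, h0, hl, hstep⟩ := nwalk_hdist (hcon (H.descent r w).2 r)
    set L := H.hdist (H.descent r w).2 r
    have hwalk : H.IsWalkOn (L + 1) (fun n => if n = 0 then w else vs (n - 1))
        (fun n => if n = 0 then (H.descent r w).1 else es (n - 1)) := by
      intro i hi
      rcases i with _ | i
      · simpa [h0] using ⟨hf, hwf, hw'f⟩
      · simpa using hstep i (by omega)
    have hmin : L + 1 ≤ H.hdist w r := hlt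
    have hfirst := hwalk.edge_zero_eq hac
      (hwalk.injOn_vertices (by simpa [hl] using hmin)) he (by simpa using hwe) (by simpa [hl])
    exact Finset.mem_filter.2 ⟨Finset.mem_erase.2 ⟨hwr, Finset.mem_univ w⟩, by simpa using hfirst⟩
  have := Finset.card_le_card hsub
  rw [Finset.card_sdiff_of_subset (show R ⊆ e from Finset.filter_subset _ e), huni e he] at this
  omega

theorem card_erase_eq_of_not_hasCycle (hcon : ∀ a b : V, H.Reach a b) (hac : ¬ H.HasCycle)
    (huni : H.Uniform k) (r : V) :
    (Finset.univ.erase r).card = H.edges.card * (k - 1) := by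
  rw [← sum_card_fiber hcon (r := r), Finset.sum_congr rfl fun e he =>
      le_antisymm (card_fiber_le hcon huni he) (le_card_fiber hcon hac huni he),
    Finset.sum_const, smul_eq_mul]

theorem descent_fst_eq {g : Finset V} {p : V} (hk : 2 ≤ k) (hcon : ∀ a b : V, H.Reach a b)
    (huni : H.Uniform k) (hg : g ∈ H.edges) (hfull : (H.fiber r g).card = k - 1)
    (hw : w ∈ g) (hp : p ∈ g) (hpw : p ≠ w) (hd : H.hdist p r ≤ H.hdist w r) :
    (H.descent r w).1 = g := by
  obtain ⟨w', hw', hsub, hlt⟩ :=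
    exists_fiber_subset_erase hcon (Finset.card_pos.1 (by omega : 0 < (H.fiber r g).card))
  have hfib : H.fiber r g = g.erase w' := Finset.eq_of_subset_of_card_le hsub (by
    rw [Finset.card_erase_of_mem hw', huni g hg, hfull])
  have hww' : w ≠ w' := by
    rintro rfl
    have := hlt p (hfib ▸ Finset.mem_erase.2 ⟨hpw, hp⟩)
    omega
  have hwfib : w ∈ H.fiber r g := hfib ▸ Finset.mem_erase.2 ⟨hww', hw⟩
  exact (Finset.mem_filter.1 hwfib).2

/-- If every fiber is full, the vertex of a cycle farthest from `r` would have two descent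
edges. -/
theorem not_hasCycle_of_card_erase_eq (hk : 2 ≤ k) (hcon : ∀ a b : V, H.Reach a b)
    (huni : H.Uniform k) (r : V)
    (hcount : (Finset.univ.erase r).card = H.edges.card * (k - 1)) : ¬ H.HasCycle := by
  intro hcyc
  have hfull : ∀ e ∈ H.edges, (H.fiber r e).card = k - 1 := by
    by_contra! hne
    obtain ⟨e₀, he₀, hne₀⟩ := hne
    have := Finset.sum_lt_sum (fun e he => card_fiber_le hcon huni he (r := r))
      ⟨e₀, he₀, lt_of_le_of_ne (card_fiber_le hcon huni he₀) hne₀⟩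
    rw [sum_card_fiber hcon, hcount, Finset.sum_const, smul_eq_mul] at this
    exact lt_irrefl _ this
  obtain ⟨w, g₁, hg₁, g₂, hg₂, hne, hw₁, hw₂, ⟨p₁, hp₁, hpw₁, hd₁⟩, ⟨p₂, hp₂, hpw₂, hd₂⟩⟩ :=
    exists_max_of_hasCycle hcyc (H.hdist · r)
  exact hne ((descent_fst_eq hk hcon huni hg₁ (hfull g₁ hg₁) hw₁ hp₁ hpw₁ hd₁).symm.trans
    (descent_fst_eq hk hcon huni hg₂ (hfull g₂ hg₂) hw₂ hp₂ hpw₂ hd₂))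

end Counting

section Spectral

variable {G : FinHypergraph V} {k : ℕ} {α ρ : ℝ} {x y : V → ℝ}

noncomputable def edgeTerm (k : ℕ) (α : ℝ) (x : V → ℝ) (e : Finset V) : ℝ :=
  α * ∑ v ∈ e, x v ^ k + (1 - α) * (k : ℝ) * ∏ v ∈ e, x v

noncomputable def aform (G : FinHypergraph V) (k : ℕ) (α : ℝ) (x : V → ℝ) : ℝ :=
  ∑ e ∈ G.edges, edgeTerm k α x e

theorem edgeTerm_const_mul {e : Finset V} (he : e.card = k) (c : ℝ) :
    edgeTerm k α (fun v => c * x v) e = c ^ k * edgeTerm k α x e := by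
  simp only [edgeTerm, mul_pow, ← Finset.mul_sum, Finset.prod_mul_distrib, Finset.prod_const, he]
  ring

theorem aform_const_mul (huni : G.Uniform k) (c : ℝ) :
    G.aform k α (fun v => c * x v) = c ^ k * G.aform k α x := by
  rw [aform, aform, Finset.mul_sum]
  exact Finset.sum_congr rfl fun e he => edgeTerm_const_mul (huni e he) c

theorem edgeTerm_update_of_mem [DecidableEq V] {e : Finset V} {w : V} (hw : w ∈ e) (t : ℝ) :
    edgeTerm k α (Function.update x w t) e =
      α * t ^ k + (1 - α) * k * (∏ z ∈ e.erase w, x z) * t + α * ∑ z ∈ e.erase w, x z ^ k := by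
  have hpow : ∀ v, Function.update x w t v ^ k = Function.update (fun v => x v ^ k) w (t ^ k) v :=
    fun v => by by_cases h : v = w <;> simp [h]
  simp only [edgeTerm, hpow, Finset.sum_update_of_mem hw, Finset.prod_update_of_mem hw,
    Finset.sdiff_singleton_eq_erase]
  ring

theorem edgeTerm_update_of_notMem [DecidableEq V] {e : Finset V} {w : V} (hw : w ∉ e) (t : ℝ) :
    edgeTerm k α (Function.update x w t) e = edgeTerm k α x e := by
  have hpow : ∀ v, Function.update x w t v ^ k = Function.update (fun v => x v ^ k) w (t ^ k) v :=
    fun v => by by_cases h : v = w <;> simp [h]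
  simp only [edgeTerm, hpow, Finset.sum_update_of_notMem hw, Finset.prod_update_of_notMem hw]

theorem exists_aform_update [DecidableEq V] (G : FinHypergraph V) (k : ℕ) (α : ℝ) (x : V → ℝ)
    (w : V) :
    ∃ C, ∀ t, G.aform k α (Function.update x w t) = α * G.degree w * t ^ k +
      (1 - α) * k * (∑ e ∈ G.edges.filter (w ∈ ·), ∏ z ∈ e.erase w, x z) * t + C := by
  refine ⟨α * ∑ e ∈ G.edges.filter (w ∈ ·), ∑ z ∈ e.erase w, x z ^ k +
    ∑ e ∈ G.edges.filter (w ∉ ·), edgeTerm k α x e, fun t => ?_⟩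
  rw [aform, ← Finset.sum_filter_add_sum_filter_not G.edges (w ∈ ·),
    Finset.sum_congr rfl fun e he => edgeTerm_update_of_mem (Finset.mem_filter.1 he).2 t,
    Finset.sum_congr rfl fun e he => edgeTerm_update_of_notMem (Finset.mem_filter.1 he).2 t]
  simp only [Finset.sum_add_distrib, Finset.sum_const, ← Finset.mul_sum, ← Finset.sum_mul,
    nsmul_eq_mul, degree]
  ring

variable [Fintype V]

theorem edgeTerm_le (hk : 1 ≤ k) (hα0 : 0 ≤ α) (hα1 : α ≤ 1) (hx0 : ∀ v, 0 ≤ x v)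
    (hx1 : ∑ v, x v ^ k = 1) (e : Finset V) : edgeTerm k α x e ≤ k := by
  have hsum : ∑ v ∈ e, x v ^ k ≤ 1 := hx1 ▸ Finset.sum_le_sum_of_subset_of_nonneg
    (Finset.subset_univ e) fun v _ _ => pow_nonneg (hx0 v) k
  have hle1 : ∀ v, x v ≤ 1 := fun v => (pow_le_one_iff_of_nonneg (hx0 v) (by omega)).1
    (hx1 ▸ Finset.single_le_sum (fun w _ => pow_nonneg (hx0 w) k) (Finset.mem_univ v))
  have hprod : ∏ v ∈ e, x v ≤ 1 := Finset.prod_le_one (fun v _ => hx0 v) fun v _ => hle1 v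
  have hk1 : (1 : ℝ) ≤ k := by exact_mod_cast hk
  calc edgeTerm k α x e ≤ α * 1 + (1 - α) * k * 1 := by
        unfold edgeTerm
        gcongr
    _ ≤ k := by nlinarith

theorem bddAbove_aspec_set (G : FinHypergraph V) (hk : 1 ≤ k) (hα0 : 0 ≤ α) (hα1 : α ≤ 1) :
    BddAbove {r : ℝ | ∃ x : V → ℝ, (∀ v, 0 ≤ x v) ∧ (∑ v, x v ^ k) = 1 ∧
      r = ∑ e ∈ G.edges, (α * ∑ v ∈ e, x v ^ k + (1 - α) * (k : ℝ) * ∏ v ∈ e, x v)} := by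
  refine ⟨G.edges.card * k, ?_⟩
  rintro r ⟨x, hx0, hx1, rfl⟩
  calc G.aform k α x ≤ ∑ _e ∈ G.edges, (k : ℝ) :=
        Finset.sum_le_sum fun e _ => edgeTerm_le hk hα0 hα1 hx0 hx1 e
    _ = G.edges.card * k := by rw [Finset.sum_const, nsmul_eq_mul]

theorem aform_le_aspec (hk : 1 ≤ k) (hα0 : 0 ≤ α) (hα1 : α ≤ 1) (hx0 : ∀ v, 0 ≤ x v)
    (hx1 : ∑ v, x v ^ k = 1) : G.aform k α x ≤ G.aspec k α :=
  le_csSup (bddAbove_aspec_set G hk hα0 hα1) ⟨x, hx0, hx1, rfl⟩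

theorem aform_le_mul_sum_pow (hk : 1 ≤ k) (huni : G.Uniform k)
    (hub : ∀ y : V → ℝ, (∀ v, 0 ≤ y v) → ∑ v, y v ^ k = 1 → G.aform k α y ≤ ρ)
    (hy : ∀ v, 0 ≤ y v) : G.aform k α y ≤ ρ * ∑ v, y v ^ k := by
  set s := ∑ v, y v ^ k
  have hs : 0 ≤ s := Finset.sum_nonneg fun v _ => pow_nonneg (hy v) k
  rcases hs.eq_or_lt with hs | hs
  · have hy0 : y = fun v => 0 * y v := funext fun v => by
      have := (Finset.sum_eq_zero_iff_of_nonneg fun v _ => pow_nonneg (hy v) k).1 hs.symm v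
        (Finset.mem_univ v)
      simp [pow_eq_zero_iff (by omega : k ≠ 0) |>.1 this]
    rw [hy0, aform_const_mul huni, zero_pow (by omega), ← hs]
    simp
  · set c := (s ^ (k : ℝ)⁻¹)⁻¹
    have hck : c ^ k * s = 1 := by
      rw [inv_pow, ← Real.rpow_natCast, ← Real.rpow_mul hs.le,
        inv_mul_cancel₀ (by positivity : (k : ℝ) ≠ 0), Real.rpow_one, inv_mul_cancel₀ hs.ne']
    have hc : 0 < c := by positivity
    have hunit := hub (fun v => c * y v) (fun v => mul_nonneg hc.le (hy v))
      (by simp only [mul_pow, ← Finset.mul_sum]; exact hck)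
    rw [aform_const_mul huni] at hunit
    calc G.aform k α y = c ^ k * s * G.aform k α y := by rw [hck, one_mul]
      _ = c ^ k * G.aform k α y * s := by ring
      _ ≤ ρ * s := mul_le_mul_of_nonneg_right hunit hs.le

/-- Lagrange's condition at a positive maximiser: `aform (update x w t) - ρ ∑ (update x w t)^k`
is a polynomial `(α d(w) - ρ) t^k + (1 - α) k S t + C` in `t`, maximal at `t = x w`. -/
theorem eigen_eq_of_forall_le [DecidableEq V] (hk : 2 ≤ k) (hx : ∀ v, 0 < x v)
    (hub : ∀ y : V → ℝ, (∀ v, 0 ≤ y v) → G.aform k α y ≤ ρ * ∑ v, y v ^ k)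
    (hattain : G.aform k α x = ρ * ∑ v, x v ^ k) (w : V) :
    α * G.degree w * x w ^ (k - 1) +
        (1 - α) * ∑ e ∈ G.edges.filter (w ∈ ·), ∏ z ∈ e.erase w, x z = ρ * x w ^ (k - 1) := by
  obtain ⟨C, hC⟩ := exists_aform_update G k α x w
  set S := ∑ e ∈ G.edges.filter (w ∈ ·), ∏ z ∈ e.erase w, x z
  set D := ∑ v ∈ Finset.univ.erase w, x v ^ k
  have hsum : ∀ t, ∑ v, Function.update x w t v ^ k = t ^ k + D := fun t => by
    rw [← Finset.add_sum_erase _ _ (Finset.mem_univ w), Function.update_self]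
    congr 1
    exact Finset.sum_congr rfl fun v hv => by
      rw [Function.update_of_ne (Finset.ne_of_mem_erase hv)]
  set g : ℝ → ℝ := fun t => (α * G.degree w - ρ) * t ^ k + (1 - α) * k * S * t + (C - ρ * D)
  have hg : ∀ t, g t = G.aform k α (Function.update x w t) -
      ρ * ∑ v, Function.update x w t v ^ k := fun t => by
    rw [hC, hsum]
    ring
  have hmax : IsLocalMax g (x w) := by
    filter_upwards [eventually_gt_nhds (hx w)] with t ht
    have hpos : ∀ v, 0 ≤ Function.update x w t v := fun v => by
      by_cases h : v = w
      · simp [h, ht.le]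
      · simp [h, (hx v).le]
    rw [hg, hg, Function.update_eq_self, hattain, sub_self, sub_nonpos]
    exact hub _ hpos
  have hderiv := (((hasDerivAt_pow k (x w)).const_mul (α * G.degree w - ρ)).add
    ((hasDerivAt_id' (x w)).const_mul ((1 - α) * k * S))).add_const (C - ρ * D)
  have hk0 : (k : ℝ) ≠ 0 := by positivity
  have := hmax.hasDerivAt_eq_zero hderiv
  apply mul_left_cancel₀ hk0
  linear_combination this

theorem IsPerron.eigen_eq [DecidableEq V] (hx : G.IsPerron k α x) (hk : 2 ≤ k) (hα0 : 0 ≤ α)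
    (hα1 : α ≤ 1) (huni : G.Uniform k) (w : V) :
    α * G.degree w * x w ^ (k - 1) + (1 - α) * ∑ e ∈ G.edges.filter (w ∈ ·),
      ∏ z ∈ e.erase w, x z = G.aspec k α * x w ^ (k - 1) :=
  eigen_eq_of_forall_le hk hx.1 (fun _ hy => aform_le_mul_sum_pow (by omega) huni
      (fun _ hy0 hy1 => aform_le_aspec (by omega) hα0 hα1 hy0 hy1) hy)
    (by rw [hx.2.1, mul_one]; exact hx.2.2) w

theorem IsPerron.of_aform_le {H : FinHypergraph V} (hx : G.IsPerron k α x) (hk : 1 ≤ k)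
    (hα0 : 0 ≤ α) (hα1 : α ≤ 1) (hρ : H.aspec k α ≤ G.aspec k α)
    (hq : G.aform k α x ≤ H.aform k α x) :
    H.IsPerron k α x ∧ H.aspec k α = G.aspec k α := by
  have hqH := aform_le_aspec (G := H) hk hα0 hα1 (fun v => (hx.1 v).le) hx.2.1
  have hqG : G.aform k α x = G.aspec k α := hx.2.2
  exact ⟨⟨hx.1, hx.2.1, show H.aform k α x = H.aspec k α by linarith⟩, by linarith⟩

end Spectral

section MoveEdges

variable [DecidableEq V] {G : FinHypergraph V} {E : Finset (Finset V)} {u v w : V}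
  {e : Finset V} {k : ℕ} {α : ℝ} {x : V → ℝ}

def replaceVertex (u v : V) (e : Finset V) : Finset V := insert v (e.erase u)

theorem mem_replaceVertex : w ∈ replaceVertex u v e ↔ w = v ∨ w ≠ u ∧ w ∈ e := by
  simp [replaceVertex]

theorem replaceVertex_replaceVertex (hu : u ∈ e) (hv : v ∉ e) :
    replaceVertex v u (replaceVertex u v e) = e := by
  rw [replaceVertex, replaceVertex, Finset.erase_insert fun h => hv (Finset.mem_of_mem_erase h),
    Finset.insert_erase hu]

theorem card_replaceVertex (hu : u ∈ e) (hv : v ∉ e) : (replaceVertex u v e).card = e.card := by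
  rw [replaceVertex, Finset.card_insert_of_notMem fun h => hv (Finset.mem_of_mem_erase h),
    Finset.card_erase_add_one hu]

theorem edgeTerm_le_edgeTerm_replaceVertex (hα0 : 0 ≤ α) (hα1 : α ≤ 1) (hx : ∀ z, 0 ≤ x z)
    (hxuv : x u ≤ x v) (hu : u ∈ e) (hv : v ∉ e) :
    edgeTerm k α x e ≤ edgeTerm k α x (replaceVertex u v e) := by
  have hv' : v ∉ e.erase u := fun h => hv (Finset.mem_of_mem_erase h)
  rw [edgeTerm, edgeTerm, replaceVertex, Finset.sum_insert hv', Finset.prod_insert hv',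
    ← Finset.add_sum_erase _ _ hu, ← Finset.mul_prod_erase _ _ hu]
  have : 0 ≤ 1 - α := by linarith
  gcongr
  exacts [hx u, Finset.prod_nonneg fun z _ => hx z]

structure IsMovable (G : FinHypergraph V) (E : Finset (Finset V)) (u v : V) : Prop where
  subset : E ⊆ G.edges
  mem : ∀ e ∈ E, u ∈ e
  notMem : ∀ e ∈ E, v ∉ e
  replaceVertex_notMem : ∀ e ∈ E, replaceVertex u v e ∉ G.edges

def moveEdges (G : FinHypergraph V) (E : Finset (Finset V)) (u v : V) : FinHypergraph V :=
  ⟨(G.edges \ E) ∪ E.image (replaceVertex u v)⟩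

theorem reach_moveEdges (hr : (G.moveEdges E u v).Reach u v) {a b : V} (hab : G.Reach a b) :
    (G.moveEdges E u v).Reach a b := by
  refine hab.of_forall_edge fun e he a ha b hb => ?_
  by_cases heE : e ∈ E
  · have hmoved : ∀ a ∈ e, ∃ a' ∈ replaceVertex u v e, (G.moveEdges E u v).Reach a a' := by
      intro a ha
      by_cases hau : a = u
      · exact ⟨v, Finset.mem_insert_self _ _, hau ▸ hr⟩
      · exact ⟨a, mem_replaceVertex.2 (Or.inr ⟨hau, ha⟩), Reach.refl _ a⟩
    obtain ⟨a', ha', hra⟩ := hmoved a ha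
    obtain ⟨b', hb', hrb⟩ := hmoved b hb
    exact hra.trans ((reach_of_mem (Finset.mem_union_right _ (Finset.mem_image_of_mem _ heE))
      ha' hb').trans hrb.symm)
  · exact reach_of_mem (Finset.mem_union_left _ (Finset.mem_sdiff.2 ⟨he, heE⟩)) ha hb

namespace IsMovable

variable (h : G.IsMovable E u v)
include h

theorem injOn : Set.InjOn (replaceVertex u v) E := fun e he f hf hef => by
  rw [← replaceVertex_replaceVertex (h.mem e he) (h.notMem e he), hef,
    replaceVertex_replaceVertex (h.mem f hf) (h.notMem f hf)]

theorem disjoint : Disjoint (G.edges \ E) (E.image (replaceVertex u v)) := by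
  rw [Finset.disjoint_right]
  rintro _ hf hmem
  obtain ⟨e, he, rfl⟩ := Finset.mem_image.1 hf
  exact h.replaceVertex_notMem e he (Finset.mem_sdiff.1 hmem).1

theorem card_edges_moveEdges : (G.moveEdges E u v).edges.card = G.edges.card := by
  rw [moveEdges, Finset.card_union_of_disjoint h.disjoint, Finset.card_sdiff_of_subset h.subset,
    Finset.card_image_of_injOn h.injOn]
  have := Finset.card_le_card h.subset
  omega

theorem uniform_moveEdges (huni : G.Uniform k) : (G.moveEdges E u v).Uniform k := by
  intro f hf
  rcases Finset.mem_union.1 hf with hf | hf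
  · exact huni f (Finset.mem_sdiff.1 hf).1
  · obtain ⟨e, he, rfl⟩ := Finset.mem_image.1 hf
    rw [card_replaceVertex (h.mem e he) (h.notMem e he), huni e (h.subset he)]

theorem degree_moveEdges_add (w : V) :
    (G.moveEdges E u v).degree w + (E.filter (w ∈ ·)).card =
      G.degree w + (E.filter (w ∈ replaceVertex u v ·)).card := by
  have hsub : E.filter (w ∈ ·) ⊆ G.edges.filter (w ∈ ·) := Finset.filter_subset_filter _ h.subset
  have hfilter : (G.moveEdges E u v).edges.filter (w ∈ ·) =
      (G.edges.filter (w ∈ ·) \ E.filter (w ∈ ·)) ∪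
        (E.filter (w ∈ replaceVertex u v ·)).image (replaceVertex u v) := by
    ext f
    simp only [moveEdges, Finset.mem_filter, Finset.mem_union, Finset.mem_sdiff,
      Finset.mem_image]
    constructor
    · rintro ⟨⟨hf, hfE⟩ | ⟨e, he, rfl⟩, hw⟩
      · exact Or.inl ⟨⟨hf, hw⟩, fun hc => hfE hc.1⟩
      · exact Or.inr ⟨e, ⟨he, hw⟩, rfl⟩
    · rintro (⟨⟨hf, hw⟩, hfE⟩ | ⟨e, ⟨he, hw⟩, rfl⟩)
      · exact ⟨Or.inl ⟨hf, fun hc => hfE ⟨hc, hw⟩⟩, hw⟩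
      · exact ⟨Or.inr ⟨e, he, rfl⟩, hw⟩
  have hdisj : Disjoint (G.edges.filter (w ∈ ·) \ E.filter (w ∈ ·))
      ((E.filter (w ∈ replaceVertex u v ·)).image (replaceVertex u v)) :=
    h.disjoint.mono
      (fun f hf => by simp only [Finset.mem_sdiff, Finset.mem_filter] at hf ⊢; tauto)
      (Finset.image_subset_image (Finset.filter_subset _ _))
  rw [degree, hfilter, Finset.card_union_of_disjoint hdisj, Finset.card_sdiff_of_subset hsub,
    Finset.card_image_of_injOn (h.injOn.mono (Finset.filter_subset _ _)), degree]
  have := Finset.card_le_card hsub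
  omega

theorem degree_moveEdges_left (huv : u ≠ v) :
    (G.moveEdges E u v).degree u + E.card = G.degree u := by
  have := h.degree_moveEdges_add u
  rwa [Finset.filter_true_of_mem h.mem, Finset.filter_false_of_mem fun e _ => by
    simp [mem_replaceVertex, huv], Finset.card_empty, add_zero] at this

theorem degree_moveEdges_right : (G.moveEdges E u v).degree v = G.degree v + E.card := by
  have := h.degree_moveEdges_add v
  rwa [Finset.filter_false_of_mem h.notMem, Finset.filter_true_of_mem fun e _ => by
    simp [mem_replaceVertex], Finset.card_empty, add_zero] at this

theorem degree_moveEdges_of_ne (hu : w ≠ u) (hv : w ≠ v) :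
    (G.moveEdges E u v).degree w = G.degree w := by
  have := h.degree_moveEdges_add w
  simp only [mem_replaceVertex, hu, hv, ne_eq, not_false_eq_true, true_and, false_or] at this
  omega

theorem degreeMultiset_moveEdges [Fintype V] (huv : u ≠ v)
    (hcard : E.card + G.degree v = G.degree u) :
    (G.moveEdges E u v).degreeMultiset = G.degreeMultiset := by
  have hswap : ∀ w, (G.moveEdges E u v).degree w = G.degree (Equiv.swap u v w) := by
    intro w
    have hl := h.degree_moveEdges_left huv
    have hr := h.degree_moveEdges_right
    by_cases hwu : w = u
    · rw [hwu, Equiv.swap_apply_left]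
      omega
    by_cases hwv : w = v
    · rw [hwv, Equiv.swap_apply_right]
      omega
    rw [Equiv.swap_apply_of_ne_of_ne hwu hwv, h.degree_moveEdges_of_ne hwu hwv]
  calc Finset.univ.val.map (G.moveEdges E u v).degree
      = (Finset.univ.val.map (Equiv.swap u v)).map G.degree := by
        rw [Multiset.map_map]
        exact Multiset.map_congr rfl fun w _ => hswap w
    _ = Finset.univ.val.map G.degree := by rw [Multiset.map_univ_val_equiv]

theorem sum_filter_mem_moveEdges_left (huv : u ≠ v) (f : Finset V → ℝ) :
    ∑ e ∈ (G.moveEdges E u v).edges.filter (u ∈ ·), f e =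
      ∑ e ∈ G.edges.filter (u ∈ ·), f e - ∑ e ∈ E, f e := by
  have hfilter : (G.moveEdges E u v).edges.filter (u ∈ ·) = G.edges.filter (u ∈ ·) \ E := by
    ext f
    simp only [moveEdges, Finset.mem_filter, Finset.mem_union, Finset.mem_sdiff,
      Finset.mem_image]
    constructor
    · rintro ⟨⟨hf, hfE⟩ | ⟨e, -, rfl⟩, hu⟩
      · exact ⟨⟨hf, hu⟩, hfE⟩
      · simp [mem_replaceVertex, huv] at hu
    · rintro ⟨⟨hf, hu⟩, hfE⟩
      exact ⟨Or.inl ⟨hf, hfE⟩, hu⟩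
  rw [hfilter, Finset.sum_sdiff_eq_sub fun e he => Finset.mem_filter.2 ⟨h.subset he, h.mem e he⟩]

theorem aform_le_aform_moveEdges (hα0 : 0 ≤ α) (hα1 : α ≤ 1) (hx : ∀ z, 0 ≤ x z)
    (hxuv : x u ≤ x v) : G.aform k α x ≤ (G.moveEdges E u v).aform k α x := by
  rw [aform, aform, moveEdges, Finset.sum_union h.disjoint,
    Finset.sum_image fun a ha b hb hab => h.injOn ha hb hab, ← Finset.sum_sdiff h.subset]
  gcongr with e he
  exact edgeTerm_le_edgeTerm_replaceVertex hα0 hα1 hx hxuv (h.mem e he) (h.notMem e he)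

/-- The count `|V| - 1 = |E|(k - 1)` of supertrees survives the move, and together with
connectivity it characterises supertrees. -/
theorem isSupertree_moveEdges [Fintype V] (hG : G.IsSupertree k) (hk : 2 ≤ k)
    (hr : (G.moveEdges E u v).Reach u v) : (G.moveEdges E u v).IsSupertree k := by
  obtain ⟨huni, hconn, hac⟩ := hG
  have hcon := connected_iff_reach.1 hconn
  have hcon' : ∀ a b, (G.moveEdges E u v).Reach a b := fun a b => reach_moveEdges hr (hcon a b)
  refine ⟨h.uniform_moveEdges huni, connected_iff_reach.2 hcon', ?_⟩
  refine not_hasCycle_of_card_erase_eq hk hcon' (h.uniform_moveEdges huni) u ?_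
  rw [h.card_edges_moveEdges]
  exact card_erase_eq_of_not_hasCycle hcon hac huni u

end IsMovable

/-- Any edge through `u` other than the last one on a `u`–`v` walk can be moved: in `G - e`,
`u` still reaches `v`, so acyclicity forbids `v ∈ e` and `replaceVertex u v e ∈ G.edges`. -/
theorem exists_isMovable (hac : ¬ G.HasCycle) (huni : G.Uniform k) (hk : 2 ≤ k)
    (hreach : G.Reach u v) (huv : u ≠ v) {m : ℕ} (hm : m < G.degree u) :
    ∃ E, G.IsMovable E u v ∧ E.card = m ∧ (G.moveEdges E u v).Reach u v := by
  obtain ⟨f, hf, huf, w, hwf, hwv⟩ := exists_mem_reach_deleteIncidenceSet hreach huv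
  have hcard : m ≤ ((G.edges.filter (u ∈ ·)).erase f).card := by
    rw [Finset.card_erase_of_mem (Finset.mem_filter.2 ⟨hf, huf⟩)]
    exact Nat.le_sub_one_of_lt hm
  obtain ⟨E, hEsub, hEcard⟩ := Finset.exists_subset_card_eq hcard
  have hE : ∀ e ∈ E, e ≠ f ∧ e ∈ G.edges ∧ u ∈ e := fun e he => by
    simpa [and_assoc] using hEsub he
  have hsep : ∀ e ∈ E, (G.eraseEdge e).Reach u v := fun e he =>
    (reach_of_mem (Finset.mem_erase.2 ⟨(hE e he).1.symm, hf⟩) huf hwf).trans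
      (hwv.mono fun g hg => by
        obtain ⟨hg, hug⟩ := Finset.mem_filter.1 hg
        exact Finset.mem_erase.2 ⟨fun hge => hug (hge ▸ (hE e he).2.2), hg⟩)
  have hnotMem : ∀ e ∈ E, v ∉ e := fun e he hv =>
    not_reach_eraseEdge hac (hE e he).2.1 (hE e he).2.2 hv huv (hsep e he)
  have hreplace : ∀ e ∈ E, replaceVertex u v e ∉ G.edges := by
    intro e he hmem
    obtain ⟨a, ha⟩ : (e.erase u).Nonempty := by
      rw [← Finset.card_pos, Finset.card_erase_of_mem (hE e he).2.2, huni e (hE e he).2.1]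
      omega
    have hne : replaceVertex u v e ≠ e := fun h => hnotMem e he (h ▸ Finset.mem_insert_self v _)
    exact not_reach_eraseEdge hac (hE e he).2.1 (hE e he).2.2 (Finset.mem_of_mem_erase ha)
      (Finset.ne_of_mem_erase ha).symm ((hsep e he).trans (reach_of_mem
        (Finset.mem_erase.2 ⟨hne, hmem⟩) (Finset.mem_insert_self v _)
        (Finset.mem_insert_of_mem ha)))
  refine ⟨E, ⟨fun e he => (hE e he).2.1, fun e he => (hE e he).2.2, hnotMem, hreplace⟩, hEcard,
    ?_⟩
  have hfE : f ∈ (G.moveEdges E u v).edges :=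
    Finset.mem_union_left _ (Finset.mem_sdiff.2 ⟨hf, fun hfE => (hE f hfE).1 rfl⟩)
  refine (reach_of_mem hfE huf hwf).trans (hwv.mono fun g hg => ?_)
  obtain ⟨hg, hug⟩ := Finset.mem_filter.1 hg
  exact Finset.mem_union_left _ (Finset.mem_sdiff.2 ⟨hg, fun hgE => hug (hE g hgE).2.2⟩)

end MoveEdges

end FinHypergraph

/-- if `G` maximizes the `α`-spectral radius among `k`-uniform
supertrees with degree sequence `π` and `x` is its `α`-Perron vector, then
`d_G(u) > d_G(v)` implies `x_u > x_v`. -/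
theorem perron_strict_mono_of_degree (k : ℕ) (hk : 2 ≤ k)
    (α : ℝ) (hα0 : 0 ≤ α) (hα1 : α < 1) (π : Multiset ℕ)
    {V : Type} [Fintype V] [DecidableEq V] (G : FinHypergraph V)
    (hG : G.IsSupertree k) (hπ : G.degreeMultiset = π)
    (hmax : ∀ (W : Type) [Fintype W] [DecidableEq W] (H : FinHypergraph W),
      H.IsSupertree k → H.degreeMultiset = π → H.aspec k α ≤ G.aspec k α)
    (x : V → ℝ) (hx : G.IsPerron k α x)
    (u v : V) (hd : G.degree v < G.degree u) :
    x v < x u := by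
  by_contra! hxuv
  have huv : u ≠ v := by rintro rfl; exact lt_irrefl _ hd
  have hreach := FinHypergraph.connected_iff_reach.1 hG.2.1
  have hdv := FinHypergraph.one_le_degree_of_reach (hreach v u) huv.symm
  obtain ⟨E, hE, hEcard, hr⟩ := FinHypergraph.exists_isMovable hG.2.2 hG.1 hk (hreach u v) huv
    (m := G.degree u - G.degree v) (by omega)
  have hG' := hE.isSupertree_moveEdges hG hk hr
  have hπ' := hE.degreeMultiset_moveEdges huv (by omega)
  obtain ⟨hx', hρ⟩ := hx.of_aform_le (by omega) hα0 hα1.le (hmax V _ hG' (hπ' ▸ hπ))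
    (hE.aform_le_aform_moveEdges hα0 hα1.le (fun z => (hx.1 z).le) hxuv)
  have heq := hx.eigen_eq hk hα0 hα1.le hG.1 u
  have heq' := hx'.eigen_eq hk hα0 hα1.le hG'.1 u
  have hdeg : (G.moveEdges E u v).degree u = G.degree v := by
    have := hE.degree_moveEdges_left huv
    omega
  rw [hdeg, hE.sum_filter_mem_moveEdges_left huv, hρ] at heq'
  have hmoved : 0 < ∑ e ∈ E, ∏ z ∈ e.erase u, x z :=
    Finset.sum_pos (fun e _ => Finset.prod_pos fun z _ => hx.1 z) (Finset.card_pos.1 (by omega))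
  have hgap : (0 : ℝ) ≤ α * (G.degree u - G.degree v) * x u ^ (k - 1) :=
    mul_nonneg (mul_nonneg hα0 (sub_nonneg.2 (by exact_mod_cast hd.le))) (pow_pos (hx.1 u) _).le
  linarith [mul_pos (sub_pos.2 hα1) hmoved]
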